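/- Let q be an odd prime power, let d satisfy 2 ≤ d ≤ 4, let 𝓔 ⊆ F_q^d be a finite set, and let r ∈ F_q. Let C denote the set of tuples (x_1, ..., x_5, y_1, ..., y_5) ∈ P_4(r) such that x_1, ..., x_5 are pairwise distinct and y_1, ..., y_5 are pairwise distinct. Then |C| ≥ |P_4(r)| − 10·|𝓔|·|P_3(r)| − 3·|𝓔|^3·q^(2d−2)·|P_1(r)| − |𝓔|^2·|P_2(r)|. -/

import Mathlib

/-- `norm2 x = x₁² + ⋯ + x_d²` for `x ∈ F_q^d`. -/
def norm2 {F : Type*} [Field F] {d : ℕ} (x : Fin d → F) : F := ∑ i, x i ^ 2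

/-- `𝓔` contains a pair of `k`-stars with dilation ratio `r`: there are distinct
`x₁, …, x_{k+1} ∈ 𝓔` and distinct `y₁, …, y_{k+1} ∈ 𝓔` with
`‖y_i − y₁‖ = r‖x_i − x₁‖ ≠ 0` for `i = 2, …, k+1`. -/
def ContainsPairOfStars {F : Type*} [Field F] {d : ℕ}
    (𝓔 : Finset (Fin d → F)) (k : ℕ) (r : F) : Prop :=
  ∃ x y : Fin (k + 1) → (Fin d → F),
    Function.Injective x ∧ Function.Injective y ∧
    (∀ i, x i ∈ 𝓔) ∧ (∀ i, y i ∈ 𝓔) ∧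
    ∀ i : Fin (k + 1), i ≠ 0 →
      norm2 (y i - y 0) = r * norm2 (x i - x 0) ∧ r * norm2 (x i - x 0) ≠ 0

/-- `𝓔` contains a pair of `k`-paths with dilation ratio `r`: there are distinct
`x₁, …, x_{k+1} ∈ 𝓔` and distinct `y₁, …, y_{k+1} ∈ 𝓔` with
`‖y_{i+1} − y_i‖ = r‖x_{i+1} − x_i‖ ≠ 0` for `i = 1, …, k`. -/
def ContainsPairOfPaths {F : Type*} [Field F] {d : ℕ}
    (𝓔 : Finset (Fin d → F)) (k : ℕ) (r : F) : Prop :=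
  ∃ x y : Fin (k + 1) → (Fin d → F),
    Function.Injective x ∧ Function.Injective y ∧
    (∀ i, x i ∈ 𝓔) ∧ (∀ i, y i ∈ 𝓔) ∧
    ∀ i : Fin k,
      norm2 (y i.succ - y i.castSucc) = r * norm2 (x i.succ - x i.castSucc) ∧
      r * norm2 (x i.succ - x i.castSucc) ≠ 0

open scoped Classical

/-- `P_k(r)`: tuples `(x₁, …, x_{k+1}, y₁, …, y_{k+1}) ∈ 𝓔^{2k+2}` with
`‖y_{i+1} − y_i‖ = r‖x_{i+1} − x_i‖ ≠ 0` for all `i = 1, …, k`. -/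

noncomputable def Pset {F : Type*} [Field F] [Fintype F] {d : ℕ}
    (𝓔 : Finset (Fin d → F)) (k : ℕ) (r : F) :
    Finset ((Fin (k + 1) → Fin d → F) × (Fin (k + 1) → Fin d → F)) :=
  Finset.univ.filter fun p =>
    (∀ i, p.1 i ∈ 𝓔) ∧ (∀ i, p.2 i ∈ 𝓔) ∧
    ∀ i : Fin k,
      norm2 (p.2 i.succ - p.2 i.castSucc) = r * norm2 (p.1 i.succ - p.1 i.castSucc) ∧
      r * norm2 (p.1 i.succ - p.1 i.castSucc) ≠ 0

/-!
Index the points of a tuple of `P_4(r)` as `x₀, …, x₄` and `y₀, …, y₄`. Consecutive points are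
distinct, so a degenerate tuple repeats a point at non-adjacent positions. If the repetition
involves an endpoint (`x₀ = x_j` with `j ≥ 2`, or `x_j = x₄` with `j ≤ 2`, or the same for `y`),
dropping that endpoint leaves a tuple of `P_3(r)` from which the original is recovered given the
other sequence's endpoint: at most `10·|𝓔|·|P_3(r)|` such tuples.

Otherwise `x₁ = x₃` and `y₂ ≠ y₄` (or symmetrically with `x` and `y` exchanged, which replaces
`r` by `r⁻¹`). Such a tuple is determined by `(x₁, x₂, y₁, y₂) ∈ P_1(r)`, by `x₀, x₄, y₄ ∈ 𝓔`,
by `y₀`, which lies on a sphere around `y₁`, and by `y₃`, which lies on spheres around `y₂` and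
`y₄`. A sphere in `F_q^d` has at most `2q^(d-1)` points and, as `q` is odd, two spheres with
distinct centres, the first of nonzero radius, share at most `2q^(d-2)` points. Hence there are at
most `8·q^(2d-3)·|𝓔|³·|P_1(r)| ≤ 3·q^(2d-2)·|𝓔|³·|P_1(r)|` such tuples.
-/

open Finset

section

variable {F : Type*} [Field F]

lemma norm2_sub_comm {d : ℕ} (x y : Fin d → F) : norm2 (x - y) = norm2 (y - x) := by
  simp only [norm2, Pi.sub_apply]
  exact sum_congr rfl fun i _ => by ring

variable {n : ℕ}

lemma exists_ne_sq_add_sq_ne_zero (h2 : (2 : F) ≠ 0) {v : Fin (n + 2) → F} (hv : v ≠ 0) :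
    ∃ i k, i ≠ k ∧ v i ≠ 0 ∧ (v i ^ 2 + v k ^ 2 ≠ 0 ∨ n = 0) := by
  obtain ⟨i, hi⟩ := Function.ne_iff.mp hv
  rcases n with _ | m
  · exact ⟨i, i.succAbove 0, (Fin.succAbove_ne i 0).symm, hi, Or.inr rfl⟩
  by_contra! h
  have hsq {j k} (hjk : j ≠ k) (hj : v j ≠ 0) : v j ^ 2 + v k ^ 2 = 0 := (h j k hjk hj).1
  set j := i.succAbove 0
  set l := i.succAbove 1
  have hij : v i ^ 2 + v j ^ 2 = 0 := hsq (Fin.succAbove_ne i 0).symm hi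
  have hil : v i ^ 2 + v l ^ 2 = 0 := hsq (Fin.succAbove_ne i 1).symm hi
  have hj : v j ≠ 0 := fun h0 => hi (pow_eq_zero_iff two_ne_zero |>.mp (by
    linear_combination hij - h0 * v j))
  have hjl : v j ^ 2 + v l ^ 2 = 0 := hsq (Fin.succAbove_right_injective.ne zero_ne_one) hj
  exact mul_ne_zero h2 (pow_ne_zero 2 hi) (by linear_combination hij + hil - hjl)

section Spheres

variable [Fintype F]

lemma card_filter_quadratic_eq_zero_le_two {a b c : F} (h : a ≠ 0 ∨ b ≠ 0 ∨ c ≠ 0) :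
    #{u | a * u ^ 2 + b * u + c = 0} ≤ 2 := by
  open Polynomial in
  set p : F[X] := C a * X ^ 2 + C b * X + C c
  have hp : p ≠ 0 := by
    rintro hp
    have h2 := congrArg (coeff · 2) hp
    have h1 := congrArg (coeff · 1) hp
    have h0 := congrArg (coeff · 0) hp
    simp [p, coeff_X, coeff_C] at h0 h1 h2
    tauto
  calc #{u | a * u ^ 2 + b * u + c = 0} ≤ #p.roots.toFinset :=
        card_le_card fun u hu => by simpa [hp, p] using hu
    _ ≤ Multiset.card p.roots := Multiset.toFinset_card_le _
    _ ≤ p.natDegree := card_roots' p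
    _ ≤ 2 := natDegree_quadratic_le

noncomputable def sphere (c : Fin n → F) (t : F) : Finset (Fin n → F) := {z | norm2 (z - c) = t}

lemma mem_sphere {c z : Fin n → F} {t : F} : z ∈ sphere c t ↔ norm2 (z - c) = t := by
  simp [sphere]

lemma card_sphere_le (c : Fin (n + 1) → F) (t : F) :
    #(sphere c t) ≤ 2 * Fintype.card F ^ n := by
  calc #(sphere c t) ≤ 2 * #((sphere c t).image Fin.tail) :=
        card_le_mul_card_image _ _ fun w _ => ?_
    _ ≤ 2 * Fintype.card F ^ n := by
        gcongr
        simpa using card_le_univ ((sphere c t).image Fin.tail)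
  let R := ∑ i, (w i - c i.succ) ^ 2
  calc #{z ∈ sphere c t | Fin.tail z = w}
      ≤ #{u | 1 * u ^ 2 + (-2 * c 0) * u + (c 0 ^ 2 + R - t) = 0} := by
        refine card_le_card_of_injOn (· 0) (fun z hz => ?_) fun z hz z' hz' h => ?_
        · simp only [mem_coe, mem_filter, mem_sphere] at hz
          obtain ⟨hz, rfl⟩ := hz
          simp only [norm2, Fin.sum_univ_succ, Pi.sub_apply] at hz
          rw [mem_coe, mem_filter_univ]
          simp only [R, Fin.tail]
          linear_combination hz
        · simp only [mem_coe, mem_filter] at hz hz'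
          rw [← Fin.cons_self_tail z, ← Fin.cons_self_tail z', hz.2, hz'.2]
          simp only at h
          rw [h]
    _ ≤ 2 := card_filter_quadratic_eq_zero_le_two (Or.inl one_ne_zero)

lemma card_line_inter_circle_le_two (h2 : (2 : F) ≠ 0) {α β s : F} (hα : α ≠ 0)
    (hαβs : α ^ 2 + β ^ 2 ≠ 0 ∨ s ≠ 0) (a b c : F) :
    #{p : F × F | α * p.1 + β * p.2 = c ∧ (p.1 - a) ^ 2 + (p.2 - b) ^ 2 = s} ≤ 2 := by
  set e := c - α * a
  -- Substitute `α x = c - β y` into `α²` times the equation of the circle.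
  calc _ ≤ #{y | (α ^ 2 + β ^ 2) * y ^ 2 + (-2 * (α ^ 2 * b + β * e)) * y
                + (α ^ 2 * b ^ 2 + e ^ 2 - α ^ 2 * s) = 0} := by
        refine card_le_card_of_injOn Prod.snd (fun p hp => ?_) fun p hp p' hp' h => ?_
        · rw [mem_coe, mem_filter_univ] at hp ⊢
          linear_combination α ^ 2 * hp.2 - (α * (p.1 - a) + e - β * p.2) * hp.1
        · rw [mem_coe, mem_filter_univ] at hp hp'
          refine Prod.ext (mul_left_cancel₀ hα ?_) h
          linear_combination hp.1 - hp'.1 - β * h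
    _ ≤ 2 := by
      refine card_filter_quadratic_eq_zero_le_two ?_
      by_contra! h
      obtain ⟨hA, hB, hC⟩ := h
      have hs : s ≠ 0 := hαβs.resolve_left (not_not.mpr hA)
      have hL : α ^ 2 * b + β * e = 0 := (mul_eq_zero.mp hB).resolve_left (neg_ne_zero.mpr h2)
      have : α ^ 4 * s = 0 := by
        linear_combination (α ^ 2 * b - β * e) * hL + e ^ 2 * hA - α ^ 2 * hC
      exact hs ((mul_eq_zero.mp this).resolve_left (pow_ne_zero 4 hα))

lemma card_sphere_filter_hyperplane_le (h2 : (2 : F) ≠ 0) {v : Fin (n + 2) → F}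
    {i k : Fin (n + 2)} (hik : i ≠ k) (hvi : v i ≠ 0) {s : F}
    (hs : v i ^ 2 + v k ^ 2 ≠ 0 ∨ (n = 0 ∧ s ≠ 0)) (a : Fin (n + 2) → F) (c : F) :
    #{z ∈ sphere a s | ∑ j, v j * z j = c} ≤ 2 * Fintype.card F ^ n := by
  obtain ⟨k, rfl⟩ := Fin.exists_succAbove_eq hik.symm
  let rest : Fin n → Fin (n + 2) := fun j => i.succAbove (k.succAbove j)
  have hsum (f : Fin (n + 2) → F) : ∑ j, f j = f i + f (i.succAbove k) + ∑ j, f (rest j) := by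
    rw [Fin.sum_univ_succAbove _ i, Fin.sum_univ_succAbove _ k, add_assoc]
  have hext {z z' : Fin (n + 2) → F} (hi : z i = z' i)
      (hk : z (i.succAbove k) = z' (i.succAbove k)) (hrest : z ∘ rest = z' ∘ rest) : z = z' := by
    funext j
    rcases Fin.eq_self_or_eq_succAbove i j with rfl | ⟨j, rfl⟩
    · exact hi
    rcases Fin.eq_self_or_eq_succAbove k j with rfl | ⟨j, rfl⟩
    · exact hk
    · exact congrFun hrest j
  set S := {z ∈ sphere a s | ∑ j, v j * z j = c}
  -- Fixing the coordinates other than `i` and `k` leaves a line meeting a circle.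
  calc #S ≤ 2 * #(S.image (· ∘ rest)) := card_le_mul_card_image _ _ fun w _ => ?_
    _ ≤ 2 * Fintype.card F ^ n := by
        gcongr
        simpa using card_le_univ (S.image (· ∘ rest))
  calc #{z ∈ S | z ∘ rest = w}
      ≤ #{p : F × F | v i * p.1 + v (i.succAbove k) * p.2 = c - ∑ j, v (rest j) * w j ∧
          (p.1 - a i) ^ 2 + (p.2 - a (i.succAbove k)) ^ 2 = s - ∑ j, (w j - a (rest j)) ^ 2} := by
        refine card_le_card_of_injOn (fun z => (z i, z (i.succAbove k))) (fun z hz => ?_)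
          fun z hz z' hz' h => ?_
        · simp only [S, mem_coe, mem_filter, mem_sphere] at hz
          obtain ⟨⟨hsph, hlin⟩, rfl⟩ := hz
          rw [mem_coe, mem_filter_univ]
          rw [norm2, hsum] at hsph
          rw [hsum] at hlin
          simp only [Function.comp_apply, Pi.sub_apply] at hsph ⊢
          exact ⟨by linear_combination hlin, by linear_combination hsph⟩
        · simp only [S, mem_coe, mem_filter] at hz hz'
          simp only [Prod.mk.injEq] at h
          exact hext h.1 h.2 (hz.2.trans hz'.2.symm)
    _ ≤ 2 := card_line_inter_circle_le_two h2 hvi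
        (hs.imp_right fun ⟨hn, hs₀⟩ => by subst hn; simpa using hs₀) _ _ _

lemma card_sphere_inter_sphere_le (h2 : (2 : F) ≠ 0) {a b : Fin (n + 2) → F} (hab : a ≠ b)
    {s : F} (hs : s ≠ 0) (t : F) :
    #(sphere a s ∩ sphere b t) ≤ 2 * Fintype.card F ^ n := by
  set v : Fin (n + 2) → F := fun j => 2 * (b j - a j)
  have hv : v ≠ 0 := by
    obtain ⟨j, hj⟩ := Function.ne_iff.mp hab
    exact Function.ne_iff.mpr ⟨j, mul_ne_zero h2 (sub_ne_zero.mpr hj.symm)⟩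
  obtain ⟨i, k, hik, hvi, hvik⟩ := exists_ne_sq_add_sq_ne_zero h2 hv
  -- Subtracting the two sphere equations gives a linear equation.
  refine le_trans (card_le_card fun z hz => ?_) (card_sphere_filter_hyperplane_le h2 hik hvi
    (hvik.imp_right (⟨·, hs⟩)) a (s - t + norm2 b - norm2 a))
  rw [mem_inter, mem_sphere, mem_sphere] at hz
  rw [mem_filter, mem_sphere, ← hz.1, ← hz.2]
  refine ⟨rfl, ?_⟩
  simp only [norm2, v, Pi.sub_apply, ← sum_sub_distrib, ← sum_add_distrib]
  exact sum_congr rfl fun j _ => by ring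

end Spheres

def EndpointRepeat {α : Type*} (f : Fin 5 → α) : Prop :=
  f 0 = f 2 ∨ f 0 = f 3 ∨ f 0 = f 4 ∨ f 1 = f 4 ∨ f 2 = f 4

lemma endpointRepeat_or_of_not_injective {α : Type*} {f : Fin 5 → α}
    (hf : ∀ i : Fin 4, f i.castSucc ≠ f i.succ) (hinj : ¬Function.Injective f) :
    EndpointRepeat f ∨ f 1 = f 3 := by
  obtain ⟨i, j, hij, hne⟩ : ∃ i j, f i = f j ∧ i ≠ j := by
    simpa [Function.Injective] using hinj
  have h0 := hf 0; have h1 := hf 1; have h2 := hf 2; have h3 := hf 3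
  simp only [EndpointRepeat]
  fin_cases i <;> fin_cases j <;> simp_all [eq_comm]

lemma endpointRepeat_or_of_not_injective_pair {α : Type*} {x y : Fin 5 → α}
    (hx : ∀ i : Fin 4, x i.castSucc ≠ x i.succ) (hy : ∀ i : Fin 4, y i.castSucc ≠ y i.succ)
    (hinj : ¬(Function.Injective x ∧ Function.Injective y)) :
    ((EndpointRepeat x ∨ EndpointRepeat y) ∨ x 1 = x 3 ∧ y 2 ≠ y 4) ∨ y 1 = y 3 ∧ x 2 ≠ x 4 := by
  rcases not_and_or.1 hinj with h | h
  · rcases endpointRepeat_or_of_not_injective hx h with h | h13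
    · exact Or.inl (Or.inl (Or.inl h))
    by_cases h24 : y 2 = y 4
    · exact Or.inl (Or.inl (Or.inr (Or.inr (Or.inr (Or.inr (Or.inr h24))))))
    · exact Or.inl (Or.inr ⟨h13, h24⟩)
  · rcases endpointRepeat_or_of_not_injective hy h with h | h13
    · exact Or.inl (Or.inl (Or.inr h))
    by_cases h24 : x 2 = x 4
    · exact Or.inl (Or.inl (Or.inl (Or.inr (Or.inr (Or.inr (Or.inr h24))))))
    · exact Or.inr ⟨h13, h24⟩

section Paths

variable [Fintype F] {d : ℕ} {𝓔 : Finset (Fin d → F)} {r : F}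

lemma mem_Pset {k : ℕ} {p : (Fin (k + 1) → Fin d → F) × (Fin (k + 1) → Fin d → F)} :
    p ∈ Pset 𝓔 k r ↔ (∀ i, p.1 i ∈ 𝓔) ∧ (∀ i, p.2 i ∈ 𝓔) ∧ ∀ i : Fin k,
      norm2 (p.2 i.succ - p.2 i.castSucc) = r * norm2 (p.1 i.succ - p.1 i.castSucc) ∧
      r * norm2 (p.1 i.succ - p.1 i.castSucc) ≠ 0 := by
  simp [Pset]

lemma norm2_edge_of_mem_Pset {k : ℕ} {p} (hp : p ∈ Pset 𝓔 k r) (i : Fin k) :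
    norm2 (p.2 i.succ - p.2 i.castSucc) = r * norm2 (p.1 i.succ - p.1 i.castSucc) :=
  ((mem_Pset.1 hp).2.2 i).1

lemma castSucc_ne_succ_of_mem_Pset {k : ℕ} {p} (hp : p ∈ Pset 𝓔 k r) (i : Fin k) :
    p.1 i.castSucc ≠ p.1 i.succ ∧ p.2 i.castSucc ≠ p.2 i.succ := by
  obtain ⟨hy, hx⟩ := (mem_Pset.1 hp).2.2 i
  refine ⟨fun h => hx ?_, fun h => hx ?_⟩
  · simp [h, norm2]
  · rw [← hy, h]
    simp [norm2]

lemma comp_mem_Pset {k m : ℕ} {p} (hp : p ∈ Pset 𝓔 k r) (σ : Fin (m + 1) → Fin (k + 1))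
    (hσ : ∀ i : Fin m, ∃ j : Fin k, (σ i.castSucc = j.castSucc ∧ σ i.succ = j.succ) ∨
      (σ i.castSucc = j.succ ∧ σ i.succ = j.castSucc)) :
    (p.1 ∘ σ, p.2 ∘ σ) ∈ Pset 𝓔 m r := by
  rw [mem_Pset] at hp ⊢
  refine ⟨fun i => hp.1 _, fun i => hp.2.1 _, fun i => ?_⟩
  obtain ⟨j, ⟨h0, h1⟩ | ⟨h0, h1⟩⟩ := hσ i
  · simpa [h0, h1] using hp.2.2 j
  · simpa [h0, h1, norm2_sub_comm (p.1 j.castSucc), norm2_sub_comm (p.2 j.castSucc)]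
      using hp.2.2 j

lemma swap_mem_Pset {k : ℕ} {p} (hp : p ∈ Pset 𝓔 k r) : p.swap ∈ Pset 𝓔 k r⁻¹ := by
  rw [mem_Pset] at hp ⊢
  refine ⟨hp.2.1, hp.1, fun i => ?_⟩
  obtain ⟨hy, hx⟩ := hp.2.2 i
  rw [Prod.fst_swap, Prod.snd_swap, hy, inv_mul_cancel_left₀ (left_ne_zero_of_mul hx)]
  exact ⟨rfl, right_ne_zero_of_mul hx⟩

lemma card_filter_Pset_swap {k : ℕ}
    (Q : (Fin (k + 1) → Fin d → F) × (Fin (k + 1) → Fin d → F) → Prop) [DecidablePred Q] :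
    #{p ∈ Pset 𝓔 k r | Q p.swap} = #{p ∈ Pset 𝓔 k r⁻¹ | Q p} := by
  refine card_nbij' Prod.swap Prod.swap (fun p hp => ?_) (fun p hp => ?_)
    (fun _ _ => rfl) (fun _ _ => rfl)
  · simp only [mem_coe, mem_filter] at hp ⊢
    exact ⟨swap_mem_Pset hp.1, hp.2⟩
  · simp only [mem_coe, mem_filter, Prod.swap_swap] at hp ⊢
    exact ⟨by simpa using swap_mem_Pset hp.1, hp.2⟩

lemma card_Pset_inv (k : ℕ) : #(Pset 𝓔 k r⁻¹) = #(Pset 𝓔 k r) := by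
  simpa using (card_filter_Pset_swap (𝓔 := 𝓔) (r := r) (k := k) fun _ => True).symm

lemma card_filter_Pset_rev {k : ℕ}
    (Q : (Fin (k + 1) → Fin d → F) × (Fin (k + 1) → Fin d → F) → Prop) [DecidablePred Q] :
    #{p ∈ Pset 𝓔 k r | Q (p.1 ∘ Fin.rev, p.2 ∘ Fin.rev)} = #{p ∈ Pset 𝓔 k r | Q p} := by
  have hrev {p} (hp : p ∈ Pset 𝓔 k r) : (p.1 ∘ Fin.rev, p.2 ∘ Fin.rev) ∈ Pset 𝓔 k r :=
    comp_mem_Pset hp Fin.rev fun i => ⟨i.rev, Or.inr ⟨Fin.rev_castSucc i, Fin.rev_succ i⟩⟩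
  refine card_nbij' (fun p => (p.1 ∘ Fin.rev, p.2 ∘ Fin.rev))
    (fun p => (p.1 ∘ Fin.rev, p.2 ∘ Fin.rev)) (fun p hp => ?_) (fun p hp => ?_)
    (fun p _ => ?_) (fun p _ => ?_)
  · simp only [mem_coe, mem_filter] at hp ⊢
    exact ⟨hrev hp.1, hp.2⟩
  · simp only [mem_coe, mem_filter] at hp ⊢
    refine ⟨hrev hp.1, ?_⟩
    simpa [Function.comp_def] using hp.2
  · simp [Function.comp_def]
  · simp [Function.comp_def]

lemma card_filter_Pset_head_eq_le {k : ℕ} {j : Fin (k + 2)} (hj : j ≠ 0) :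
    #{p ∈ Pset 𝓔 (k + 1) r | p.1 0 = p.1 j} ≤ #𝓔 * #(Pset 𝓔 k r) := by
  rw [← card_product]
  refine card_le_card_of_injOn (fun p => (p.2 0, (p.1 ∘ Fin.succ, p.2 ∘ Fin.succ)))
    (fun p hp => ?_) fun p hp p' hp' h => ?_
  · rw [mem_coe, mem_filter] at hp
    exact mem_product.2 ⟨(mem_Pset.1 hp.1).2.1 0,
      comp_mem_Pset hp.1 Fin.succ fun i => ⟨i.succ, Or.inl ⟨Fin.succ_castSucc i, rfl⟩⟩⟩
  · simp only [mem_coe, mem_filter, Prod.mk.injEq] at hp hp' h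
    obtain ⟨j, rfl⟩ := Fin.exists_succ_eq.mpr hj
    refine Prod.ext (funext fun l => Fin.cases ?_ (congrFun h.2.1) l)
      (funext fun l => Fin.cases h.1 (congrFun h.2.2) l)
    rw [hp.2, hp'.2]
    exact congrFun h.2.1 j

lemma card_filter_Pset_eq_last_le {k : ℕ} {j : Fin (k + 2)} (hj : j ≠ Fin.last (k + 1)) :
    #{p ∈ Pset 𝓔 (k + 1) r | p.1 j = p.1 (Fin.last (k + 1))} ≤ #𝓔 * #(Pset 𝓔 k r) := by
  rw [← card_filter_Pset_rev (fun p => p.1 j = p.1 (Fin.last (k + 1)))]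
  simpa [eq_comm] using card_filter_Pset_head_eq_le (𝓔 := 𝓔) (r := r) (Fin.rev_ne_iff.mpr hj)

lemma card_filter_endpointRepeat_le :
    #{p ∈ Pset 𝓔 4 r | EndpointRepeat p.1} ≤ 5 * (#𝓔 * #(Pset 𝓔 3 r)) := by
  have h02 : #{p ∈ Pset 𝓔 4 r | p.1 0 = p.1 2} ≤ #𝓔 * #(Pset 𝓔 3 r) :=
    card_filter_Pset_head_eq_le (by decide)
  have h03 : #{p ∈ Pset 𝓔 4 r | p.1 0 = p.1 3} ≤ #𝓔 * #(Pset 𝓔 3 r) :=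
    card_filter_Pset_head_eq_le (by decide)
  have h04 : #{p ∈ Pset 𝓔 4 r | p.1 0 = p.1 4} ≤ #𝓔 * #(Pset 𝓔 3 r) :=
    card_filter_Pset_head_eq_le (by decide)
  have h14 : #{p ∈ Pset 𝓔 4 r | p.1 1 = p.1 4} ≤ #𝓔 * #(Pset 𝓔 3 r) :=
    card_filter_Pset_eq_last_le (j := 1) (by decide)
  have h24 : #{p ∈ Pset 𝓔 4 r | p.1 2 = p.1 4} ≤ #𝓔 * #(Pset 𝓔 3 r) :=
    card_filter_Pset_eq_last_le (j := 2) (by decide)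
  calc #{p ∈ Pset 𝓔 4 r | EndpointRepeat p.1}
      ≤ #({p ∈ Pset 𝓔 4 r | p.1 0 = p.1 2} ∪ {p ∈ Pset 𝓔 4 r | p.1 0 = p.1 3} ∪
          {p ∈ Pset 𝓔 4 r | p.1 0 = p.1 4} ∪ {p ∈ Pset 𝓔 4 r | p.1 1 = p.1 4} ∪
          {p ∈ Pset 𝓔 4 r | p.1 2 = p.1 4}) :=
        card_le_card fun p hp => by
          rw [mem_filter] at hp
          obtain ⟨hp, h | h | h | h | h⟩ := hp <;> simp [hp, h]
    _ ≤ 5 * (#𝓔 * #(Pset 𝓔 3 r)) := by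
        grw [card_union_le, card_union_le, card_union_le, card_union_le, h02, h03, h04, h14, h24]
        omega

end Paths

/-- When `x₁ = x₃`, the key together with `y₀` and `y₃` determines the tuple. -/
def middleKey {V : Type*} (p : (Fin 5 → V) × (Fin 5 → V)) :
    ((Fin 2 → V) × (Fin 2 → V)) × V × V × V :=
  ((p.1 ∘ ![1, 2], p.2 ∘ ![1, 2]), p.1 0, p.1 4, p.2 4)

lemma middleKey_eq_iff {V : Type*} {p p' : (Fin 5 → V) × (Fin 5 → V)} :
    middleKey p = middleKey p' ↔ p.1 0 = p'.1 0 ∧ p.1 1 = p'.1 1 ∧ p.1 2 = p'.1 2 ∧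
      p.1 4 = p'.1 4 ∧ p.2 1 = p'.2 1 ∧ p.2 2 = p'.2 2 ∧ p.2 4 = p'.2 4 := by
  simp only [middleKey, Prod.mk.injEq, funext_iff, Fin.forall_fin_two, Function.comp_apply,
    Matrix.cons_val_zero, Matrix.cons_val_one]
  tauto

section DegenerateTuples

variable [Fintype F] {𝓔 : Finset (Fin (n + 2) → F)} {r : F}

lemma middleKey_mem {p} (hp : p ∈ Pset 𝓔 4 r) :
    middleKey p ∈ Pset 𝓔 1 r ×ˢ 𝓔 ×ˢ 𝓔 ×ˢ 𝓔 := by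
  have hE := mem_Pset.1 hp
  exact mem_product.2 ⟨comp_mem_Pset hp ![1, 2] (by decide),
    mem_product.2 ⟨hE.1 0, mem_product.2 ⟨hE.1 4, hE.2.1 4⟩⟩⟩

lemma card_filter_middleKey_eq_le (h2 : (2 : F) ≠ 0) {p₀} (hp₀ : p₀ ∈ Pset 𝓔 4 r)
    (hy₀ : p₀.2 2 ≠ p₀.2 4) :
    #{p ∈ Pset 𝓔 4 r | p.1 1 = p.1 3 ∧ middleKey p = middleKey p₀}
      ≤ 2 * Fintype.card F ^ (n + 1) * (2 * Fintype.card F ^ n) := by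
  have hr₀ : r * norm2 (p₀.1 1 - p₀.1 2) ≠ 0 := by
    simpa [norm2_sub_comm (p₀.1 1)] using ((mem_Pset.1 hp₀).2.2 1).2
  set S₁ := sphere (p₀.2 1) (r * norm2 (p₀.1 1 - p₀.1 0))
  set S₂ := sphere (p₀.2 2) (r * norm2 (p₀.1 1 - p₀.1 2)) ∩
    sphere (p₀.2 4) (r * norm2 (p₀.1 4 - p₀.1 1))
  calc _ ≤ #(S₁ ×ˢ S₂) := by
        refine card_le_card_of_injOn (fun p => (p.2 0, p.2 3)) (fun p hp => ?_)
          fun p hp p' hp' h => ?_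
        · simp only [mem_coe, mem_filter, middleKey_eq_iff] at hp
          obtain ⟨hp, hx13, hx0, hx1, hx2, hx4, hy1, hy2, hy4⟩ := hp
          have e0 : norm2 (p.2 1 - p.2 0) = r * norm2 (p.1 1 - p.1 0) :=
            norm2_edge_of_mem_Pset hp 0
          have e2 : norm2 (p.2 3 - p.2 2) = r * norm2 (p.1 3 - p.1 2) :=
            norm2_edge_of_mem_Pset hp 2
          have e3 : norm2 (p.2 4 - p.2 3) = r * norm2 (p.1 4 - p.1 3) :=
            norm2_edge_of_mem_Pset hp 3
          simp only [mem_coe, mem_product, mem_inter, mem_sphere, S₁, S₂]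
          rw [← hx0, ← hx1, ← hx2, ← hx4, ← hy1, ← hy2, ← hy4, norm2_sub_comm (p.2 0),
            norm2_sub_comm (p.2 3) (p.2 4)]
          rw [← hx13] at e2 e3
          exact ⟨e0, e2, e3⟩
        · simp only [mem_coe, mem_filter] at hp hp'
          obtain ⟨hx0, hx1, hx2, hx4, hy1, hy2, hy4⟩ :=
            middleKey_eq_iff.1 (hp.2.2.trans hp'.2.2.symm)
          simp only [Prod.mk.injEq] at h
          refine Prod.ext (funext fun l => ?_) (funext fun l => ?_) <;> fin_cases l
          exacts [hx0, hx1, hx2, hp.2.1 ▸ hp'.2.1 ▸ hx1, hx4, h.1, hy1, hy2, h.2, hy4]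
    _ = #S₁ * #S₂ := card_product _ _
    _ ≤ _ := Nat.mul_le_mul (card_sphere_le _ _) (card_sphere_inter_sphere_le h2 hy₀ hr₀ _)

lemma card_filter_middle_le (h2 : (2 : F) ≠ 0) :
    #{p ∈ Pset 𝓔 4 r | p.1 1 = p.1 3 ∧ p.2 2 ≠ p.2 4}
      ≤ 4 * (Fintype.card F ^ (2 * n + 1) * (#𝓔 ^ 3 * #(Pset 𝓔 1 r))) := by
  set M := {p ∈ Pset 𝓔 4 r | p.1 1 = p.1 3 ∧ p.2 2 ≠ p.2 4}
  calc #M ≤ 2 * Fintype.card F ^ (n + 1) * (2 * Fintype.card F ^ n) * #(M.image middleKey) :=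
        card_le_mul_card_image _ _ fun b hb => ?_
    _ ≤ 2 * Fintype.card F ^ (n + 1) * (2 * Fintype.card F ^ n) *
          #(Pset 𝓔 1 r ×ˢ 𝓔 ×ˢ 𝓔 ×ˢ 𝓔) := by
        gcongr
        exact image_subset_iff.2 fun p hp => middleKey_mem (mem_filter.1 hp).1
    _ = _ := by simp only [card_product]; ring
  obtain ⟨p₀, hp₀, rfl⟩ := mem_image.1 hb
  rw [mem_filter] at hp₀
  refine le_trans (card_le_card fun p hp => ?_) (card_filter_middleKey_eq_le h2 hp₀.1 hp₀.2.2)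
  simp only [M, mem_filter] at hp ⊢
  exact ⟨hp.1.1, hp.1.2.1, hp.2⟩

lemma card_filter_not_injective_le (h2 : (2 : F) ≠ 0) :
    #{p ∈ Pset 𝓔 4 r | ¬(Function.Injective p.1 ∧ Function.Injective p.2)}
      ≤ 10 * (#𝓔 * #(Pset 𝓔 3 r)) +
        8 * (Fintype.card F ^ (2 * n + 1) * (#𝓔 ^ 3 * #(Pset 𝓔 1 r))) := by
  have hx : #{p ∈ Pset 𝓔 4 r | EndpointRepeat p.1} ≤ 5 * (#𝓔 * #(Pset 𝓔 3 r)) :=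
    card_filter_endpointRepeat_le
  have hy : #{p ∈ Pset 𝓔 4 r | EndpointRepeat p.2} ≤ 5 * (#𝓔 * #(Pset 𝓔 3 r)) :=
    (card_filter_Pset_swap fun p => EndpointRepeat p.1).trans_le
      (card_filter_endpointRepeat_le.trans_eq (by rw [card_Pset_inv]))
  have hmx := card_filter_middle_le (𝓔 := 𝓔) (r := r) h2
  have hmy : #{p ∈ Pset 𝓔 4 r | p.2 1 = p.2 3 ∧ p.1 2 ≠ p.1 4}
      ≤ 4 * (Fintype.card F ^ (2 * n + 1) * (#𝓔 ^ 3 * #(Pset 𝓔 1 r))) :=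
    (card_filter_Pset_swap fun p => p.1 1 = p.1 3 ∧ p.2 2 ≠ p.2 4).trans_le
      ((card_filter_middle_le h2).trans_eq (by rw [card_Pset_inv]))
  calc _ ≤ #({p ∈ Pset 𝓔 4 r | EndpointRepeat p.1} ∪ {p ∈ Pset 𝓔 4 r | EndpointRepeat p.2} ∪
          {p ∈ Pset 𝓔 4 r | p.1 1 = p.1 3 ∧ p.2 2 ≠ p.2 4} ∪
          {p ∈ Pset 𝓔 4 r | p.2 1 = p.2 3 ∧ p.1 2 ≠ p.1 4}) := by
        refine card_le_card fun p hp => ?_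
        obtain ⟨hp, hninj⟩ := mem_filter.1 hp
        have hne := castSucc_ne_succ_of_mem_Pset hp
        simp only [mem_union, mem_filter, hp, true_and]
        exact endpointRepeat_or_of_not_injective_pair (fun i => (hne i).1) (fun i => (hne i).2)
          hninj
    _ ≤ _ := by
        grw [card_union_le, card_union_le, card_union_le, hx, hy, hmx, hmy]
        omega

end DegenerateTuples

end

theorem Pset_nondegenerate_low_dim_general {F : Type*} [Field F] [Fintype F]
    (hodd : Odd (Fintype.card F))
    {d : ℕ} (hd2 : 2 ≤ d)
    (𝓔 : Finset (Fin d → F)) (r : F) :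
    ((Pset 𝓔 4 r).card : ℤ)
        - 10 * (𝓔.card : ℤ) * ((Pset 𝓔 3 r).card : ℤ)
        - 3 * (𝓔.card : ℤ) ^ 3 * (Fintype.card F : ℤ) ^ (2 * d - 2) * ((Pset 𝓔 1 r).card : ℤ)
        - (𝓔.card : ℤ) ^ 2 * ((Pset 𝓔 2 r).card : ℤ)
      ≤ (((Pset 𝓔 4 r).filter fun p =>
          Function.Injective p.1 ∧ Function.Injective p.2).card : ℤ) := by
  obtain ⟨n, rfl⟩ : ∃ n, d = n + 2 := ⟨d - 2, by omega⟩
  have hq_odd := Nat.odd_iff.1 hodd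
  have hq : 3 ≤ Fintype.card F := by
    have := Fintype.one_lt_card (α := F)
    omega
  have h2 : (2 : F) ≠ 0 := Ring.two_ne_zero fun h => by
    have := FiniteField.even_card_iff_char_two.1 h
    omega
  have hsplit := card_filter_add_card_filter_not (s := Pset 𝓔 4 r)
    (p := fun p => Function.Injective p.1 ∧ Function.Injective p.2)
  have hbad := card_filter_not_injective_le (𝓔 := 𝓔) (r := r) h2
  have hq8 : 8 * Fintype.card F ^ (2 * n + 1) ≤ 3 * Fintype.card F ^ (2 * (n + 2) - 2) := by
    rw [show 2 * (n + 2) - 2 = 2 * n + 1 + 1 by omega, pow_succ _ (2 * n + 1)]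
    calc 8 * Fintype.card F ^ (2 * n + 1) ≤ 3 * (Fintype.card F ^ (2 * n + 1) * 3) := by omega
      _ ≤ 3 * (Fintype.card F ^ (2 * n + 1) * Fintype.card F) := by gcongr
  have := Nat.mul_le_mul_right (#𝓔 ^ 3 * #(Pset 𝓔 1 r)) hq8
  have hP2 : (0 : ℤ) ≤ (#𝓔 : ℤ) ^ 2 * #(Pset 𝓔 2 r) := by positivity
  push_cast at hsplit hbad this ⊢
  linarith

/-- For `2 ≤ d ≤ 4`, if `C` is the set of tuples of `P_4(r)` whose
`x`-parts are pairwise distinct and whose `y`-parts are pairwise distinct, then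
`|C| ≥ |P_4(r)| − 10·|𝓔|·|P_3(r)| − 3·|𝓔|³·q^(2d−2)·|P_1(r)| − |𝓔|²·|P_2(r)|`. -/
theorem Pset_nondegenerate_low_dim {F : Type*} [Field F] [Fintype F]
    (hodd : Odd (Fintype.card F))
    {d : ℕ} (hd2 : 2 ≤ d) (hd4 : d ≤ 4)
    (𝓔 : Finset (Fin d → F)) (r : F) :
    ((Pset 𝓔 4 r).card : ℤ)
        - 10 * (𝓔.card : ℤ) * ((Pset 𝓔 3 r).card : ℤ)
        - 3 * (𝓔.card : ℤ) ^ 3 * (Fintype.card F : ℤ) ^ (2 * d - 2) * ((Pset 𝓔 1 r).card : ℤ)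
        - (𝓔.card : ℤ) ^ 2 * ((Pset 𝓔 2 r).card : ℤ)
      ≤ (((Pset 𝓔 4 r).filter fun p =>
          Function.Injective p.1 ∧ Function.Injective p.2).card : ℤ) :=
  Pset_nondegenerate_low_dim_general hodd hd2 𝓔 r
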